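/- arXiv:1411.5505 — 2 statements merged into one kernel-verified Lean document; each statement's English description precedes it below -/
import Mathlib

section
/- Let q > 2, λ > 0, and let f : [0,∞) → ℝ be a twice continuously differentiable solution of the ODE f''(ξ) + λ|f'(ξ)|^q − (1/2)ξ f'(ξ) + ((q−2)/(2(q−1))) f(ξ) = 0 on [0,∞) with f(0) = −1 and f'(0) = 0, and define g(t) = e^{−t/(q−1)} f'(e^t). Then the function g(t), which is positive and bounded for large t, cannot converge to 0 as t → ∞; more precisely, if g were eventually monotone with limit L ≥ 0, then necessarily L = C₀ = (1/(λq))^{1/(q−1)}. -/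
open Set Filter Topology Real

/-- `f` is a twice continuously differentiable solution, on the set `s`, of the
self-similar profile ODE `f'' + λ|f'|^q - (1/2)ξ f' + ((q-2)/(2(q-1))) f = 0`
associated with the generalized deterministic KPZ equation. -/
def SolvesKPZProfile (q lam : ℝ) (s : Set ℝ) (f : ℝ → ℝ) : Prop :=
  ContDiffOn ℝ 2 f s ∧
  ∀ ξ ∈ s,
    derivWithin (derivWithin f s) s ξ + lam * |derivWithin f s ξ| ^ q
      - (1 / 2) * ξ * derivWithin f s ξ + ((q - 2) / (2 * (q - 1))) * f ξ = 0

/-- The function `g(t) = e^{-t/(q-1)} f'(e^t)`, i.e. the profile derivative in the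
variables `f'(ξ) = ξ^{1/(q-1)} g(t)`, `ξ = e^t`. -/
noncomputable def kpzG (q : ℝ) (f : ℝ → ℝ) : ℝ → ℝ :=
  fun t => Real.exp (-t / (q - 1)) * derivWithin f (Set.Ici 0) (Real.exp t)

/-!
Write `h = f'` and `a = 1/(q-1)`, so that `g (log ξ) = h ξ / ξ^a`. At a first zero `ξ₀ > 0` of
`f''`, the differentiated equation gives `f'''(ξ₀) = h(ξ₀)/(2(q-1)) > 0`, which is impossible for a
function that is positive on `[0, ξ₀)`; hence `f'' > 0`, `h` increases, and `f ≤ ξ h`.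
If `h = o(ξ^a)` then `λ h^q = o(ξ h)`, so the equation gives `f'' ≥ (a/4) ξ h`, which is bounded
below, and `h` grows linearly, contradicting `a < 1`.
If `h ~ L ξ^a`, integrating gives `f ~ L ξ^(a+1)/(a+1)`, and then the equation gives
`f'' ~ M ξ^(a+1)` with `M = L/q - λ L^q`. Integrating once more, `h ~ M ξ^(a+2)/(a+2)`, so `M = 0`.
-/

lemma eventually_lt_div_rpow_of_le_deriv {F H : ℝ → ℝ} {a k s u : ℝ} (ha : -1 < a) (hs : 0 < s)
    (hF : ∀ x ≥ s, HasDerivAt F (H x) x) (hH : ∀ x ≥ s, k * x ^ a ≤ H x)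
    (hu : u < k / (a + 1)) :
    ∀ᶠ x in atTop, u < F x / x ^ (a + 1) := by
  have ha1 : 0 < a + 1 := by linarith
  have hpow : ∀ x > 0, HasDerivAt (fun y => k * y ^ (a + 1) / (a + 1)) (k * x ^ a) x := by
    intro x hx
    refine (((hasDerivAt_rpow_const (p := a + 1) (Or.inl hx.ne')).const_mul k).div_const
      (a + 1)).congr_deriv ?_
    rw [add_sub_cancel_right]
    field_simp
  have hmono : MonotoneOn (fun x => F x - k * x ^ (a + 1) / (a + 1)) (Ici s) := by
    refine monotoneOn_of_hasDerivWithinAt_nonneg (f' := fun x => H x - k * x ^ a) (convex_Ici s)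
      (fun x hx => ((hF x hx).sub (hpow x (hs.trans_le hx))).continuousAt.continuousWithinAt)
      (fun x hx => ?_) (fun x hx => ?_) <;> rw [interior_Ici] at hx
    · exact ((hF x hx.le).sub (hpow x (hs.trans hx))).hasDerivWithinAt
    · exact sub_nonneg.2 (hH x hx.le)
  set C := F s - k * s ^ (a + 1) / (a + 1)
  have hlim : Tendsto (fun x => C * (x ^ (a + 1))⁻¹ + k / (a + 1)) atTop (𝓝 (k / (a + 1))) := by
    simpa using ((tendsto_rpow_atTop ha1).inv_tendsto_atTop.const_mul C).add_const (k / (a + 1))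
  filter_upwards [hlim.eventually_const_lt hu, eventually_ge_atTop s] with x hx hxs
  have hxa : 0 < x ^ (a + 1) := rpow_pos_of_pos (hs.trans_le hxs) _
  have hC : C ≤ F x - k * x ^ (a + 1) / (a + 1) := hmono (mem_Ici.2 le_rfl) hxs hxs
  refine hx.trans_le ?_
  rw [le_div_iff₀ hxa, add_mul, inv_mul_cancel_right₀ hxa.ne']
  linarith [div_mul_eq_mul_div k (a + 1) (x ^ (a + 1))]

lemma eventually_lt_div_rpow_of_tendsto {F H : ℝ → ℝ} {a L u : ℝ} (ha : -1 < a)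
    (hF : ∀ᶠ x in atTop, HasDerivAt F (H x) x)
    (hH : Tendsto (fun x => H x / x ^ a) atTop (𝓝 L)) (hu : u < L / (a + 1)) :
    ∀ᶠ x in atTop, u < F x / x ^ (a + 1) := by
  have ha1 : 0 < a + 1 := by linarith
  obtain ⟨k, huk, hkL⟩ := exists_between ((lt_div_iff₀ ha1).1 hu)
  obtain ⟨s, hs⟩ := eventually_atTop.1
    (hF.and ((hH.eventually_const_lt hkL).and (eventually_gt_atTop 0)))
  refine eventually_lt_div_rpow_of_le_deriv ha (hs s le_rfl).2.2 (fun x hx => (hs x hx).1)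
    (fun x hx => ?_) ((lt_div_iff₀ ha1).2 huk)
  obtain ⟨-, hk, hx⟩ := hs x hx
  exact ((lt_div_iff₀ (rpow_pos_of_pos hx a)).1 hk).le

lemma tendsto_div_rpow_add_one_of_hasDerivAt {F H : ℝ → ℝ} {a L : ℝ} (ha : -1 < a)
    (hF : ∀ᶠ x in atTop, HasDerivAt F (H x) x)
    (hH : Tendsto (fun x => H x / x ^ a) atTop (𝓝 L)) :
    Tendsto (fun x => F x / x ^ (a + 1)) atTop (𝓝 (L / (a + 1))) := by
  refine tendsto_order.2 ⟨fun u hu => eventually_lt_div_rpow_of_tendsto ha hF hH hu,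
    fun u hu => ?_⟩
  have hneg := eventually_lt_div_rpow_of_tendsto (F := -F) (H := -H) (L := -L) (u := -u) ha
    (hF.mono fun x hx => hx.neg) (by simpa [neg_div] using hH.neg)
    (by rw [neg_div]; exact neg_lt_neg hu)
  filter_upwards [hneg] with x hx
  simpa [neg_div] using hx

lemma exists_first_zero_of_continuousOn {w : ℝ → ℝ} {a b : ℝ} (hab : a ≤ b)
    (hw : ContinuousOn w (Icc a b)) (ha : 0 < w a) (hb : w b ≤ 0) :
    ∃ c ∈ Ioc a b, w c = 0 ∧ ∀ x ∈ Ico a c, 0 < w x := by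
  set S := Icc a b ∩ w ⁻¹' Iic 0
  have hS : IsCompact S := isCompact_Icc.of_isClosed_subset
    (hw.preimage_isClosed_of_isClosed isClosed_Icc isClosed_Iic) inter_subset_left
  have hbS : b ∈ S := ⟨right_mem_Icc.2 hab, hb⟩
  obtain ⟨⟨hac, hcb⟩, hc⟩ := hS.sInf_mem ⟨b, hbS⟩
  have hfirst : ∀ x ∈ Ico a (sInf S), 0 < w x := fun x hx => not_le.1 fun hwx =>
    hx.2.not_ge (csInf_le hS.bddBelow ⟨⟨hx.1, hx.2.le.trans hcb⟩, hwx⟩)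
  obtain ⟨z, hz, hwz⟩ := intermediate_value_Icc' hac (hw.mono (Icc_subset_Icc_right hcb))
    ⟨hc, ha.le⟩
  have hzc : z = sInf S := le_antisymm hz.2 (not_lt.1 fun hlt => (hfirst z ⟨hz.1, hlt⟩).ne' hwz)
  refine ⟨sInf S, ⟨lt_of_le_of_ne hac fun h => ?_, hcb⟩, hzc ▸ hwz, hfirst⟩
  exact (h ▸ ha).not_ge hc

lemma eq_rpow_of_div_eq_mul_rpow {q lam L : ℝ} (hq : 1 < q) (hL : 0 < L)
    (h : L / q = lam * L ^ q) : L = (1 / (lam * q)) ^ (1 / (q - 1)) := by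
  have hLq : L ^ (q - 1) = 1 / (lam * q) := by
    refine eq_one_div_of_mul_eq_one_right ?_
    rw [rpow_sub_one hL.ne', ← mul_div_assoc, mul_right_comm, ← h]
    field_simp
  rw [← hLq, one_div, rpow_rpow_inv hL.le (by linarith)]

section Profile

variable {q lam : ℝ} {f : ℝ → ℝ}

local notation "f'" => derivWithin f (Ici 0)
local notation "f''" => derivWithin (derivWithin f (Ici 0)) (Ici 0)

lemma kpzG_log {ξ : ℝ} (hξ : 0 < ξ) :
    kpzG q f (log ξ) = f' ξ / ξ ^ (1 / (q - 1)) := by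
  rw [kpzG, exp_log hξ, div_eq_mul_inv (f' ξ), ← rpow_neg hξ.le, rpow_def_of_pos hξ]
  ring_nf

lemma tendsto_deriv_div_rpow_of_tendsto_kpzG {l : Filter ℝ} (h : Tendsto (kpzG q f) atTop l) :
    Tendsto (fun ξ => f' ξ / ξ ^ (1 / (q - 1))) atTop l :=
  (h.comp tendsto_log_atTop).congr' ((eventually_gt_atTop 0).mono fun _ hξ => kpzG_log hξ)

namespace SolvesKPZProfile

lemma contDiffOn_deriv (hsol : SolvesKPZProfile q lam (Ici 0) f) : ContDiffOn ℝ 1 f' (Ici 0) :=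
  hsol.1.derivWithin (uniqueDiffOn_Ici 0) le_rfl

lemma continuousOn_deriv2 (hsol : SolvesKPZProfile q lam (Ici 0) f) :
    ContinuousOn f'' (Ici 0) :=
  hsol.contDiffOn_deriv.continuousOn_derivWithin (uniqueDiffOn_Ici 0) le_rfl

lemma hasDerivAt (hsol : SolvesKPZProfile q lam (Ici 0) f) {ξ : ℝ} (hξ : 0 < ξ) :
    HasDerivAt f (f' ξ) ξ :=
  ((hsol.1.differentiableOn two_ne_zero ξ hξ.le).hasDerivWithinAt).hasDerivAt (Ici_mem_nhds hξ)

lemma hasDerivAt_deriv (hsol : SolvesKPZProfile q lam (Ici 0) f) {ξ : ℝ} (hξ : 0 < ξ) :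
    HasDerivAt f' (f'' ξ) ξ :=
  ((hsol.contDiffOn_deriv.differentiableOn one_ne_zero ξ hξ.le).hasDerivWithinAt).hasDerivAt
    (Ici_mem_nhds hξ)

lemma deriv2_eq (hsol : SolvesKPZProfile q lam (Ici 0) f) {ξ : ℝ} (hξ : 0 ≤ ξ) :
    f'' ξ = ξ / 2 * f' ξ - lam * |f' ξ| ^ q - (q - 2) / (2 * (q - 1)) * f ξ := by
  linarith [hsol.2 ξ hξ]

lemma hasDerivAt_deriv2 (hsol : SolvesKPZProfile q lam (Ici 0) f) {ξ : ℝ} (hξ : 0 < ξ)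
    (hpos : 0 < f' ξ) (hq : q ≠ 1) :
    HasDerivAt f''
      (1 / (2 * (q - 1)) * f' ξ + (ξ / 2 - lam * q * f' ξ ^ (q - 1)) * f'' ξ) ξ := by
  have hq1 : q - 1 ≠ 0 := sub_ne_zero.2 hq
  have hrhs : HasDerivAt (fun x => x / 2 * f' x - lam * f' x ^ q - (q - 2) / (2 * (q - 1)) * f x)
      (1 / (2 * (q - 1)) * f' ξ + (ξ / 2 - lam * q * f' ξ ^ (q - 1)) * f'' ξ) ξ :=
    ((((hasDerivAt_id' ξ).div_const 2).mul (hsol.hasDerivAt_deriv hξ)).sub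
      (((hsol.hasDerivAt_deriv hξ).rpow_const (Or.inl hpos.ne')).const_mul lam)).sub
      ((hsol.hasDerivAt hξ).const_mul _) |>.congr_deriv (by field_simp; ring)
  refine hrhs.congr_of_eventuallyEq ?_
  filter_upwards [Ioi_mem_nhds hξ, (hsol.hasDerivAt_deriv hξ).continuousAt.eventually
    (lt_mem_nhds hpos)] with x hx hfx
  rw [hsol.deriv2_eq (le_of_lt hx), abs_of_pos hfx]

lemma deriv2_pos (hsol : SolvesKPZProfile q lam (Ici 0) f) (hq : 2 < q) (hf0 : f 0 < 0)
    (hf'0 : f' 0 = 0) {ξ : ℝ} (hξ : 0 ≤ ξ) : 0 < f'' ξ := by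
  have h0 : 0 < f'' 0 := by
    rw [hsol.deriv2_eq le_rfl, hf'0, abs_zero, zero_rpow (by linarith)]
    have : 0 < (q - 2) / (2 * (q - 1)) := div_pos (by linarith) (by linarith)
    nlinarith
  by_contra! hle
  obtain ⟨ξ₀, ⟨hξ₀, -⟩, hzero, hfirst⟩ := exists_first_zero_of_continuousOn hξ
    (hsol.continuousOn_deriv2.mono Icc_subset_Ici_self) h0 hle
  have hpos : 0 < f' ξ₀ := by
    have hmono : StrictMonoOn f' (Icc 0 ξ₀) :=
      strictMonoOn_of_hasDerivWithinAt_pos (convex_Icc 0 ξ₀)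
        (hsol.contDiffOn_deriv.continuousOn.mono Icc_subset_Ici_self)
        (fun x hx => by
          rw [interior_Icc] at hx; exact (hsol.hasDerivAt_deriv hx.1).hasDerivWithinAt)
        (fun x hx => by rw [interior_Icc] at hx; exact hfirst x (Ioo_subset_Ico_self hx))
    simpa [hf'0] using hmono (left_mem_Icc.2 hξ₀.le) (right_mem_Icc.2 hξ₀.le) hξ₀
  have hd := hsol.hasDerivAt_deriv2 hξ₀ hpos (by linarith)
  rw [hzero, mul_zero, add_zero] at hd
  -- `f''` vanishes at `ξ₀` with positive slope, so it is negative just before `ξ₀`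
  have hsign := eventually_nhdsWithin_sign_eq_of_deriv_pos
    (hd.deriv ▸ mul_pos (div_pos one_pos (by linarith)) hpos) hzero
  obtain ⟨x, hsx, hx⟩ := ((hsign.filter_mono nhdsWithin_le_nhds).and (Ioo_mem_nhdsLT hξ₀)).exists
  rw [sign_pos (hfirst x (Ioo_subset_Ico_self hx)), sign_neg (sub_neg.2 hx.2)] at hsx
  exact absurd hsx (by decide)

lemma strictMonoOn_deriv (hsol : SolvesKPZProfile q lam (Ici 0) f) (hq : 2 < q)
    (hf0 : f 0 < 0) (hf'0 : f' 0 = 0) : StrictMonoOn f' (Ici 0) :=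
  strictMonoOn_of_hasDerivWithinAt_pos (convex_Ici 0) hsol.contDiffOn_deriv.continuousOn
    (fun x hx => by
      rw [interior_Ici] at hx; exact (hsol.hasDerivAt_deriv hx).hasDerivWithinAt)
    (fun x hx => by rw [interior_Ici] at hx; exact hsol.deriv2_pos hq hf0 hf'0 hx.le)

lemma deriv_pos (hsol : SolvesKPZProfile q lam (Ici 0) f) (hq : 2 < q) (hf0 : f 0 < 0)
    (hf'0 : f' 0 = 0) {ξ : ℝ} (hξ : 0 < ξ) : 0 < f' ξ := by
  simpa [hf'0] using hsol.strictMonoOn_deriv hq hf0 hf'0 (mem_Ici.2 le_rfl) hξ.le hξ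

lemma le_mul_deriv (hsol : SolvesKPZProfile q lam (Ici 0) f) (hq : 2 < q) (hf0 : f 0 < 0)
    (hf'0 : f' 0 = 0) {ξ : ℝ} (hξ : 0 ≤ ξ) : f ξ ≤ ξ * f' ξ := by
  have hderiv : ∀ x ∈ interior (Ici (0 : ℝ)),
      HasDerivWithinAt (fun x => x * f' x - f x) (x * f'' x) (interior (Ici 0)) x := by
    intro x hx
    rw [interior_Ici] at hx
    exact (((hasDerivAt_id' x).mul (hsol.hasDerivAt_deriv hx)).sub
      (hsol.hasDerivAt hx)).hasDerivWithinAt.congr_deriv (by ring)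
  have hmono : MonotoneOn (fun x => x * f' x - f x) (Ici 0) :=
    monotoneOn_of_hasDerivWithinAt_nonneg (convex_Ici 0)
      ((continuousOn_id.mul hsol.contDiffOn_deriv.continuousOn).sub hsol.1.continuousOn) hderiv
      (fun x hx => by
        rw [interior_Ici] at hx; exact mul_nonneg hx.le (hsol.deriv2_pos hq hf0 hf'0 hx.le).le)
  have := hmono (mem_Ici.2 le_rfl) (mem_Ici.2 hξ) hξ
  simp only [zero_mul, zero_sub] at this
  linarith

lemma le_deriv2 (hsol : SolvesKPZProfile q lam (Ici 0) f) (hq : 2 < q) (hf0 : f 0 < 0)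
    (hf'0 : f' 0 = 0) {ξ : ℝ} (hξ : 0 < ξ) :
    (1 / (2 * (q - 1)) - lam * (f' ξ / ξ ^ (1 / (q - 1))) ^ (q - 1)) * (ξ * f' ξ) ≤ f'' ξ := by
  have hpos := hsol.deriv_pos hq hf0 hf'0 hξ
  have hq1 : 0 < q - 1 := by linarith
  have hpow : (f' ξ / ξ ^ (1 / (q - 1))) ^ (q - 1) * (ξ * f' ξ) = |f' ξ| ^ q := by
    rw [abs_of_pos hpos, div_rpow hpos.le (rpow_nonneg hξ.le _), ← rpow_mul hξ.le,
      one_div_mul_cancel hq1.ne', rpow_one, rpow_sub_one hpos.ne']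
    field_simp
  rw [← sub_nonneg, sub_mul, mul_assoc lam, hpow, hsol.deriv2_eq hξ.le]
  have hc : 0 ≤ (q - 2) / (2 * (q - 1)) := div_nonneg (by linarith) (by linarith)
  refine (mul_nonneg hc (sub_nonneg.2 (hsol.le_mul_deriv hq hf0 hf'0 hξ.le))).trans_eq ?_
  field_simp
  ring

lemma not_tendsto_deriv_div_rpow_zero (hsol : SolvesKPZProfile q lam (Ici 0) f) (hq : 2 < q)
    (hf0 : f 0 < 0) (hf'0 : f' 0 = 0) :
    ¬ Tendsto (fun ξ => f' ξ / ξ ^ (1 / (q - 1))) atTop (𝓝 0) := by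
  intro h0
  set a := 1 / (q - 1) with ha_def
  have ha : 0 < a := one_div_pos.2 (by linarith)
  have ha1 : a < 1 := (div_lt_one (by linarith)).2 (by linarith)
  have hsmall : ∀ᶠ ξ in atTop, lam * (f' ξ / ξ ^ a) ^ (q - 1) < a / 4 := by
    have hlim := ((continuousAt_rpow_const 0 (q - 1) (Or.inr (by linarith))).tendsto.comp
      h0).const_mul lam
    rw [zero_rpow (by linarith), mul_zero] at hlim
    exact hlim.eventually_lt_const (by positivity)
  obtain ⟨s, hs⟩ := eventually_atTop.1 (hsmall.and (eventually_ge_atTop 1))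
  have hs1 : 1 ≤ s := (hs s le_rfl).2
  have hf'1 := hsol.deriv_pos hq hf0 hf'0 one_pos
  set κ := a / 4 * f' 1
  have hκ : 0 < κ := by positivity
  have hgrowth : ∀ ξ ≥ s, κ * ξ ^ (a - 1) ≤ f'' ξ := by
    intro ξ hξ
    obtain ⟨hsm, h1⟩ := hs ξ hξ
    have hmono : f' 1 ≤ f' ξ :=
      (hsol.strictMonoOn_deriv hq hf0 hf'0).monotoneOn (mem_Ici.2 zero_le_one)
        (mem_Ici.2 (by linarith)) h1
    calc κ * ξ ^ (a - 1) ≤ κ :=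
          mul_le_of_le_one_right hκ.le (rpow_le_one_of_one_le_of_nonpos h1 (by linarith))
      _ ≤ a / 4 * (ξ * f' ξ) := mul_le_mul_of_nonneg_left (by nlinarith) (by positivity)
      _ ≤ (1 / (2 * (q - 1)) - lam * (f' ξ / ξ ^ a) ^ (q - 1)) * (ξ * f' ξ) := by
          refine mul_le_mul_of_nonneg_right ?_ (by nlinarith)
          rw [show 1 / (2 * (q - 1)) = a / 2 by rw [ha_def, div_div, mul_comm]]
          linarith
      _ ≤ f'' ξ := hsol.le_deriv2 hq hf0 hf'0 (by linarith)
  have hlarge := eventually_lt_div_rpow_of_le_deriv (by linarith) (by linarith)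
    (fun ξ hξ => hsol.hasDerivAt_deriv (by linarith)) hgrowth (u := κ / (2 * a))
    (by rw [sub_add_cancel]; exact div_lt_div_of_pos_left hκ ha (by linarith))
  rw [sub_add_cancel] at hlarge
  obtain ⟨ξ, hlt, hgt⟩ :=
    (hlarge.and (h0.eventually_lt_const (show 0 < κ / (2 * a) by positivity))).exists
  exact hlt.not_gt hgt

lemma div_eq_mul_abs_rpow_of_tendsto (hsol : SolvesKPZProfile q lam (Ici 0) f) (hq : 1 < q)
    {L : ℝ} (hL : Tendsto (fun ξ => f' ξ / ξ ^ (1 / (q - 1))) atTop (𝓝 L)) :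
    L / q = lam * |L| ^ q := by
  set a := 1 / (q - 1) with ha_def
  have hq1 : 0 < q - 1 := by linarith
  have ha : 0 < a := one_div_pos.2 hq1
  have haq : a * q = a + 1 := by rw [ha_def]; field_simp; ring
  have hf := tendsto_div_rpow_add_one_of_hasDerivAt (by linarith)
    ((eventually_gt_atTop 0).mono fun _ hξ => hsol.hasDerivAt hξ) hL
  have hf'' : Tendsto (fun ξ => f'' ξ / ξ ^ (a + 1))
      atTop (𝓝 (L / 2 - lam * |L| ^ q - (q - 2) / (2 * (q - 1)) * (L / (a + 1)))) := by
    refine (((hL.div_const 2).sub ((hL.abs.rpow_const (Or.inr (by linarith))).const_mul lam)).sub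
      (hf.const_mul _)).congr' ((eventually_gt_atTop 0).mono fun ξ hξ => ?_)
    have hξa : 0 < ξ ^ a := rpow_pos_of_pos hξ a
    simp only [abs_div, abs_of_pos hξa]
    rw [hsol.deriv2_eq hξ.le, div_rpow (abs_nonneg _) hξa.le, ← rpow_mul hξ.le, haq,
      rpow_add hξ, rpow_one]
    field_simp
  have hM := tendsto_nhds_unique (tendsto_div_rpow_add_one_of_hasDerivAt (by linarith)
    ((eventually_gt_atTop 0).mono fun _ hξ => hsol.hasDerivAt_deriv hξ) hf'') (by
      have := hL.mul (tendsto_rpow_neg_atTop two_pos)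
      rw [mul_zero] at this
      refine this.congr' ((eventually_gt_atTop 0).mono fun ξ hξ => ?_)
      dsimp only
      rw [rpow_neg hξ.le, add_assoc, rpow_add hξ, one_add_one_eq_two]
      field_simp)
  rw [div_eq_zero_iff, or_iff_left (by linarith)] at hM
  have hlin : L / 2 - (q - 2) / (2 * (q - 1)) * (L / (a + 1)) = L / q := by
    rw [ha_def]; field_simp; ring
  linarith

end SolvesKPZProfile

end Profile

theorem kpz_g_monotone_limit_general (q lam : ℝ) (hq : 2 < q)
    (f : ℝ → ℝ)
    (hsol : SolvesKPZProfile q lam (Set.Ici 0) f)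
    (hf0 : f 0 = -1)
    (hf'0 : derivWithin f (Set.Ici 0) 0 = 0) :
    ¬ Tendsto (kpzG q f) atTop (𝓝 0) ∧
    ∀ L : ℝ, 0 ≤ L →
      (∃ T : ℝ, MonotoneOn (kpzG q f) (Set.Ici T) ∨ AntitoneOn (kpzG q f) (Set.Ici T)) →
      Tendsto (kpzG q f) atTop (𝓝 L) →
      L = (1 / (lam * q)) ^ (1 / (q - 1)) := by
  have hnot := hsol.not_tendsto_deriv_div_rpow_zero hq (by rw [hf0]; norm_num) hf'0
  refine ⟨fun h0 => hnot (tendsto_deriv_div_rpow_of_tendsto_kpzG h0), fun L hL _ hgL => ?_⟩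
  have hlim := tendsto_deriv_div_rpow_of_tendsto_kpzG hgL
  have hLpos : 0 < L := hL.lt_of_ne fun h => hnot (h ▸ hlim)
  have hrel := hsol.div_eq_mul_abs_rpow_of_tendsto (by linarith) hlim
  rw [abs_of_pos hLpos] at hrel
  exact eq_rpow_of_div_eq_mul_rpow (by linarith) hLpos hrel

theorem kpz_g_monotone_limit (q lam : ℝ) (hq : 2 < q) (hlam : 0 < lam)
    (f : ℝ → ℝ)
    (hsol : SolvesKPZProfile q lam (Set.Ici 0) f)
    (hf0 : f 0 = -1)
    (hf'0 : derivWithin f (Set.Ici 0) 0 = 0) :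
    ¬ Tendsto (kpzG q f) atTop (𝓝 0) ∧
    ∀ L : ℝ, 0 ≤ L →
      (∃ T : ℝ, MonotoneOn (kpzG q f) (Set.Ici T) ∨ AntitoneOn (kpzG q f) (Set.Ici T)) →
      Tendsto (kpzG q f) atTop (𝓝 L) →
      L = (1 / (lam * q)) ^ (1 / (q - 1)) :=
  kpz_g_monotone_limit_general q lam hq f hsol hf0 hf'0
end

section
/- Let q > 2, λ > 0, and let f : [0,∞) → ℝ be a twice continuously differentiable solution of the ODE f''(ξ) + λ|f'(ξ)|^q − (1/2)ξ f'(ξ) + ((q−2)/(2(q−1))) f(ξ) = 0 on [0,∞) with f(0) = −1 and f'(0) = 0. Then lim_{ξ→∞} f'(ξ)/ξ^{1/(q−1)} = (1/(λq))^{1/(q−1)}. -/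
open Set Filter Topology Real

/-!
Write `g = f'`, `G = g'` (`rhs`, the profile equation solved for `f''`), `u = λ g^(q-1)` and
`β = 1/(2(q-1))`, so that `G' = β g + (x/2 - q u) G` and `u' g = (q-1) u G` while `g > 0`.
At a first zero of `G` we would have `G' = β g > 0`, so `G > 0`: `g` increases from `0`, and
`-1 ≤ f ≤ x g - 1`. This yields the logistic inequality `u' ≥ (q-1) u (β x - u)`, hence the
damping coefficient satisfies `q u - x/2 ≥ (β/2) x` eventually. Barrier arguments (`ψ' < 0`
wherever `ψ ≥ 0`) then give successively `x G ≤ 4 g` and `|G'| ≤ δ g` for every `δ > 0`, i.e.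
`(q u - x/2) q u' ≈ q u / 2`; two more barriers turn this into `q u / x → 1`, which is the claim
since `g / x^(1/(q-1)) = (q u / x / (λ q))^(1/(q-1))`.
-/

theorem eventually_nonpos_of_hasDerivAt_le_neg {ψ ψ' : ℝ → ℝ} {ρ : ℝ} (hρ : 0 < ρ)
    (hderiv : ∀ᶠ x in atTop, HasDerivAt ψ (ψ' x) x)
    (hneg : ∀ᶠ x in atTop, 0 ≤ ψ x → ψ' x ≤ -ρ) :
    ∀ᶠ x in atTop, ψ x ≤ 0 := by
  obtain ⟨A, hA⟩ := eventually_atTop.1 (hderiv.and hneg)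
  have hcont : ∀ a b, A ≤ a → ContinuousOn ψ (Icc a b) := fun a b ha x hx =>
    (hA x (ha.trans hx.1)).1.continuousAt.continuousWithinAt
  have hderivWithin : ∀ a b, A ≤ a → ∀ x ∈ Ico a b, HasDerivWithinAt ψ (ψ' x) (Ici x) x :=
    fun a b ha x hx => (hA x (ha.trans hx.1)).1.hasDerivWithinAt
  obtain ⟨B, hAB, hB⟩ : ∃ B, A ≤ B ∧ ψ B ≤ 0 := by
    by_contra! hpos
    set b := A + ψ A / ρ + 1
    have hAb : A ≤ b := by have := div_pos (hpos A le_rfl) hρ; linarith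
    have hle : ψ b ≤ ψ A - ρ * (b - A) :=
      image_le_of_deriv_right_le_deriv_boundary (hcont A b le_rfl) (hderivWithin A b le_rfl)
        (B := fun x => ψ A - ρ * (x - A)) (B' := fun _ => -ρ) (by simp) (by fun_prop)
        (fun x _ => by
          simpa using (((hasDerivAt_id x).sub_const A).const_mul ρ).const_sub (ψ A)
            |>.hasDerivWithinAt)
        (fun x hx => (hA x hx.1).2 (hpos x hx.1).le) ⟨hAb, le_rfl⟩
    have : ρ * (b - A) = ψ A + ρ := by simp only [b]; field_simp; ring
    linarith [hpos b hAb]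
  filter_upwards [eventually_ge_atTop B] with x hx
  exact image_le_of_deriv_right_lt_deriv_boundary (hcont B x hAB) (hderivWithin B x hAB)
    (B' := fun _ => 0) hB (fun _ => hasDerivAt_const _ _)
    (fun y hy hy0 => ((hA y (hAB.trans hy.1)).2 hy0.ge).trans_lt (neg_neg_of_pos hρ))
    ⟨hx, le_rfl⟩

theorem pos_of_hasDerivAt_pos_at_first_zero {ψ : ℝ → ℝ} {a : ℝ} (hc : ContinuousOn ψ (Ici a))
    (ha : 0 < ψ a)
    (hzero : ∀ x, a < x → ψ x = 0 → (∀ y ∈ Ico a x, 0 < ψ y) → ∃ d > 0, HasDerivAt ψ d x) :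
    ∀ x, a ≤ x → 0 < ψ x := by
  by_contra! ⟨b, hab, hb⟩
  have hT : IsCompact (Icc a b ∩ ψ ⁻¹' Iic 0) :=
    isCompact_Icc.of_isClosed_subset ((hc.mono Icc_subset_Ici_self).preimage_isClosed_of_isClosed
      isClosed_Icc isClosed_Iic) inter_subset_left
  obtain ⟨ξ, ⟨⟨haξ, hξb⟩, hξ⟩, hmin⟩ := hT.exists_isLeast ⟨b, ⟨hab, le_rfl⟩, hb⟩
  have hbefore : ∀ y ∈ Ico a ξ, 0 < ψ y := fun y hy =>
    not_le.1 fun h => (hmin ⟨⟨hy.1, hy.2.le.trans hξb⟩, h⟩).not_gt hy.2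
  have haξ' : a < ξ := haξ.lt_of_ne (by rintro rfl; exact (not_le.2 ha) hξ)
  have hcξ : ContinuousAt ψ ξ := hc.continuousAt (Ici_mem_nhds haξ')
  have hψξ : ψ ξ = 0 := le_antisymm hξ <| ge_of_tendsto (hcξ.tendsto.mono_left nhdsWithin_le_nhds)
    (mem_of_superset (Ico_mem_nhdsLT haξ') fun y hy => (hbefore y hy).le)
  obtain ⟨d, hd, hψd⟩ := hzero ξ haξ' hψξ hbefore
  -- a positive derivative at `ξ` would force `ψ < ψ ξ = 0` just to the left of `ξ`
  have hslope : ∀ᶠ y in 𝓝[<] ξ, 0 < slope ψ ξ y :=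
    ((hasDerivAt_iff_tendsto_slope_left_right.1 hψd).1).eventually_const_lt hd
  obtain ⟨y, hy, hyξ⟩ := (hslope.and (Ico_mem_nhdsLT haξ')).exists
  rw [slope_def_field, hψξ, sub_zero] at hy
  exact (div_neg_of_pos_of_neg (hbefore y hyξ) (sub_neg.2 hyξ.2)).not_gt hy

namespace KPZProfile

noncomputable section

def β (q : ℝ) : ℝ := 1 / (2 * (q - 1))

theorem β_pos {q : ℝ} (hq : 1 < q) : 0 < β q := by
  unfold β; have : 0 < q - 1 := by linarith
  positivity

theorem β_mul_sub_one {q : ℝ} (hq : q ≠ 1) : β q * (q - 1) = 1 / 2 := by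
  unfold β; field_simp [sub_ne_zero.2 hq]

theorem β_le_half {q : ℝ} (hq : 2 ≤ q) : β q ≤ 1 / 2 := by
  unfold β; rw [div_le_div_iff₀ (by linarith) (by norm_num)]; linarith

theorem sub_div_eq_half_sub_β {q : ℝ} (hq : q ≠ 1) : (q - 2) / (2 * (q - 1)) = 1 / 2 - β q := by
  unfold β; field_simp [sub_ne_zero.2 hq]; ring

theorem q_mul_β {q : ℝ} (hq : q ≠ 1) : q * β q = 1 / 2 + β q := by
  linarith [β_mul_sub_one hq]

def rhs (q lam : ℝ) (f g : ℝ → ℝ) (x : ℝ) : ℝ :=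
  x / 2 * g x - lam * |g x| ^ q - (q - 2) / (2 * (q - 1)) * f x

def u (q lam : ℝ) (g : ℝ → ℝ) (x : ℝ) : ℝ := lam * g x ^ (q - 1)

def uDeriv (q lam : ℝ) (f g : ℝ → ℝ) (x : ℝ) : ℝ := lam * (q - 1) * g x ^ (q - 2) * rhs q lam f g x

def rhsDeriv (q lam : ℝ) (f g : ℝ → ℝ) (x : ℝ) : ℝ :=
  β q * g x + (x / 2 - q * u q lam g x) * rhs q lam f g x

structure IsSolution (q lam : ℝ) (f g : ℝ → ℝ) : Prop where
  two_lt : 2 < q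
  lam_pos : 0 < lam
  continuousOn_f : ContinuousOn f (Ici 0)
  continuousOn_g : ContinuousOn g (Ici 0)
  hasDerivAt_f : ∀ x, 0 < x → HasDerivAt f (g x) x
  hasDerivAt_g : ∀ x, 0 < x → HasDerivAt g (rhs q lam f g x) x
  f_zero : f 0 = -1
  g_zero : g 0 = 0

end

variable {q lam : ℝ} {f g : ℝ → ℝ} {x : ℝ}

namespace IsSolution

theorem one_lt (S : IsSolution q lam f g) : 1 < q := by linarith [S.two_lt]

theorem continuousOn_rhs (S : IsSolution q lam f g) : ContinuousOn (rhs q lam f g) (Ici 0) := by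
  have hpow : ContinuousOn (fun x => |g x| ^ q) (Ici 0) :=
    S.continuousOn_g.abs.rpow_const fun _ _ => Or.inr (by linarith [S.two_lt])
  have hf := S.continuousOn_f
  have hg := S.continuousOn_g
  unfold rhs
  fun_prop

theorem hasDerivAt_rhs (S : IsSolution q lam f g) (hx : 0 < x) (hgx : 0 < g x) :
    HasDerivAt (rhs q lam f g) (rhsDeriv q lam f g x) x := by
  have hg := S.hasDerivAt_g x hx
  have hpow : HasDerivAt (fun y => |g y| ^ q) (q * g x ^ (q - 1) * rhs q lam f g x) x := by
    refine ((hg.rpow_const (p := q) (Or.inl hgx.ne')).congr_of_eventuallyEq ?_).congr_deriv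
      (by ring)
    filter_upwards [(S.continuousOn_g.continuousAt (Ici_mem_nhds hx)).eventually
      (eventually_gt_nhds hgx)] with y hy
    rw [abs_of_pos hy]
  have h : HasDerivAt (rhs q lam f g) (1 / 2 * g x + x / 2 * rhs q lam f g x
      - lam * (q * g x ^ (q - 1) * rhs q lam f g x) - (q - 2) / (2 * (q - 1)) * g x) x :=
    ((((hasDerivAt_id x).div_const 2).mul hg).sub (hpow.const_mul lam)).sub
      ((S.hasDerivAt_f x hx).const_mul _)
  refine h.congr_deriv ?_
  rw [rhsDeriv, u, sub_div_eq_half_sub_β S.one_lt.ne']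
  ring

theorem rhs_pos (S : IsSolution q lam f g) (hx : 0 ≤ x) : 0 < rhs q lam f g x := by
  refine pos_of_hasDerivAt_pos_at_first_zero S.continuousOn_rhs ?_ ?_ x hx
  · have hq := S.two_lt
    rw [rhs, S.g_zero, S.f_zero, abs_zero, zero_rpow (by linarith)]
    have : 0 < (q - 2) / (2 * (q - 1)) := div_pos (by linarith) (by linarith)
    linarith
  · intro x hx hzero hbefore
    -- `g` increases on `[0, x]`, so `g x > 0`, and at the zero `rhsDeriv x = β g x > 0`
    have hgx : 0 < g x := by
      have hmono : StrictMonoOn g (Icc 0 x) := by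
        refine strictMonoOn_of_hasDerivWithinAt_pos (f' := rhs q lam f g) (convex_Icc 0 x)
          (S.continuousOn_g.mono Icc_subset_Ici_self) ?_ ?_ <;> rw [interior_Icc]
        · exact fun y hy => (S.hasDerivAt_g y hy.1).hasDerivWithinAt
        · exact fun y hy => hbefore y ⟨hy.1.le, hy.2⟩
      simpa [S.g_zero] using hmono (left_mem_Icc.2 hx.le) (right_mem_Icc.2 hx.le) hx
    refine ⟨_, ?_, S.hasDerivAt_rhs hx hgx⟩
    simpa [rhsDeriv, hzero] using mul_pos (β_pos S.one_lt) hgx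

theorem strictMonoOn_g (S : IsSolution q lam f g) : StrictMonoOn g (Ici 0) := by
  refine strictMonoOn_of_hasDerivWithinAt_pos (f' := rhs q lam f g) (convex_Ici 0)
    S.continuousOn_g ?_ ?_ <;> rw [interior_Ici]
  · exact fun x hx => (S.hasDerivAt_g x hx).hasDerivWithinAt
  · exact fun x hx => S.rhs_pos (le_of_lt hx)

theorem g_pos (S : IsSolution q lam f g) (hx : 0 < x) : 0 < g x := by
  simpa [S.g_zero] using S.strictMonoOn_g self_mem_Ici hx.le hx

theorem g_one_le (S : IsSolution q lam f g) (hx : 1 ≤ x) : g 1 ≤ g x :=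
  S.strictMonoOn_g.monotoneOn (mem_Ici.2 zero_le_one) (mem_Ici.2 (by linarith)) hx

theorem f_mem_Icc (S : IsSolution q lam f g) (hx : 0 < x) : f x ∈ Icc (-1) (x * g x - 1) := by
  obtain ⟨ξ, hξ, hslope⟩ := exists_hasDerivAt_eq_slope f g hx
    (S.continuousOn_f.mono Icc_subset_Ici_self) fun y hy => S.hasDerivAt_f y hy.1
  rw [S.f_zero, sub_zero, eq_div_iff hx.ne'] at hslope
  have hgξ : g ξ ≤ g x := S.strictMonoOn_g.monotoneOn hξ.1.le hx.le hξ.2.le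
  constructor <;> nlinarith [S.g_pos hξ.1]

theorem u_pos (S : IsSolution q lam f g) (hx : 0 < x) : 0 < u q lam g x :=
  mul_pos S.lam_pos (rpow_pos_of_pos (S.g_pos hx) _)

theorem u_one_le (S : IsSolution q lam f g) (hx : 1 ≤ x) : u q lam g 1 ≤ u q lam g x :=
  mul_le_mul_of_nonneg_left
    (rpow_le_rpow (S.g_pos one_pos).le (S.g_one_le hx) (by linarith [S.two_lt])) S.lam_pos.le

theorem uDeriv_pos (S : IsSolution q lam f g) (hx : 0 < x) : 0 < uDeriv q lam f g x :=
  mul_pos (mul_pos (mul_pos S.lam_pos (by linarith [S.two_lt])) (rpow_pos_of_pos (S.g_pos hx) _))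
    (S.rhs_pos hx.le)

theorem hasDerivAt_u (S : IsSolution q lam f g) (hx : 0 < x) :
    HasDerivAt (u q lam g) (uDeriv q lam f g x) x := by
  refine (((S.hasDerivAt_g x hx).rpow_const (p := q - 1) (Or.inl (S.g_pos hx).ne')).const_mul
    lam).congr_deriv ?_
  rw [uDeriv, show q - 1 - 1 = q - 2 by ring]
  ring

theorem uDeriv_mul_g (S : IsSolution q lam f g) (hx : 0 < x) :
    uDeriv q lam f g x * g x = (q - 1) * u q lam g x * rhs q lam f g x := by
  have h := rpow_add_one (S.g_pos hx).ne' (q - 2)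
  rw [show q - 2 + 1 = q - 1 by ring] at h
  rw [uDeriv, u, h]
  ring

theorem rhs_eq_mul_sub (S : IsSolution q lam f g) (hx : 0 < x) :
    rhs q lam f g x = g x * (x / 2 - u q lam g x) - (q - 2) / (2 * (q - 1)) * f x := by
  have hgx := S.g_pos hx
  have h := rpow_add_one hgx.ne' (q - 1)
  rw [sub_add_cancel] at h
  rw [rhs, u, abs_of_pos hgx, h]
  ring

theorem logistic_le_uDeriv (S : IsSolution q lam f g) (hx : 0 < x) :
    (q - 1) * u q lam g x * (β q * x - u q lam g x) ≤ uDeriv q lam f g x := by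
  have hgx := S.g_pos hx
  have hrhs : g x * (β q * x - u q lam g x) ≤ rhs q lam f g x := by
    have hβ := β_le_half S.two_lt.le
    rw [S.rhs_eq_mul_sub hx, sub_div_eq_half_sub_β S.one_lt.ne']
    nlinarith [mul_le_mul_of_nonneg_left (S.f_mem_Icc hx).2 (by linarith : 0 ≤ 1 / 2 - β q)]
  refine le_of_mul_le_mul_right ?_ hgx
  rw [S.uDeriv_mul_g hx]
  nlinarith [mul_le_mul_of_nonneg_left hrhs (mul_pos (by linarith [S.two_lt] : 0 < q - 1)
    (S.u_pos hx)).le]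

theorem eventually_β_div_two_mul_le (S : IsSolution q lam f g) :
    ∀ᶠ x in atTop, β q / 2 * x ≤ q * u q lam g x - x / 2 := by
  have hq1 : 0 < q - 1 := by linarith [S.one_lt]
  have hβ := β_pos S.one_lt
  have hu1 := S.u_pos one_pos
  have hderiv : ∀ᶠ x in atTop, HasDerivAt (fun x => (1 / 2 + β q / 2) * x - q * u q lam g x)
      (1 / 2 + β q / 2 - q * uDeriv q lam f g x) x := by
    filter_upwards [eventually_gt_atTop 0] with x hx
    exact (((hasDerivAt_id x).const_mul _).sub ((S.hasDerivAt_u hx).const_mul q)).congr_deriv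
      (by ring)
  refine (eventually_nonpos_of_hasDerivAt_le_neg one_pos hderiv ?_).mono fun x hx => by linarith
  filter_upwards [eventually_ge_atTop 1, eventually_ge_atTop (8 / u q lam g 1)]
    with x hx1 hx8 hψ
  have hx0 : 0 < x := by linarith
  have hgap : β q / 2 * x ≤ q * (β q * x - u q lam g x) := by
    nlinarith [q_mul_β S.one_lt.ne']
  have hu8 : 8 ≤ u q lam g 1 * x := by rwa [div_le_iff₀ hu1, mul_comm] at hx8
  -- while `q u ≤ (1/2 + β/2) x`, the logistic lower bound makes `u` grow at least linearly
  have : u q lam g 1 * x / 4 ≤ q * uDeriv q lam f g x :=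
    calc u q lam g 1 * x / 4 = (q - 1) * u q lam g 1 * (β q / 2 * x) := by
          linear_combination (-(u q lam g 1 * x / 2)) * β_mul_sub_one S.one_lt.ne'
      _ ≤ (q - 1) * u q lam g x * (q * (β q * x - u q lam g x)) :=
          mul_le_mul (mul_le_mul_of_nonneg_left (S.u_one_le hx1) hq1.le) hgap
            (by positivity) (mul_nonneg hq1.le (S.u_pos hx0).le)
      _ = q * ((q - 1) * u q lam g x * (β q * x - u q lam g x)) := by ring
      _ ≤ q * uDeriv q lam f g x :=
          mul_le_mul_of_nonneg_left (S.logistic_le_uDeriv hx0) (by linarith [S.one_lt])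
  linarith [β_le_half S.two_lt.le]

theorem eventually_u_le (S : IsSolution q lam f g) : ∀ᶠ x in atTop, u q lam g x ≤ x := by
  filter_upwards [eventually_ge_atTop 1, eventually_ge_atTop (1 / g 1)] with x hx1 hxg
  have hx0 : 0 < x := by linarith
  have hgx := S.g_pos hx0
  have hxg1 : 1 ≤ x * g x := by
    rw [div_le_iff₀ (S.g_pos one_pos)] at hxg
    nlinarith [S.g_one_le hx1]
  have hrhs := S.rhs_pos hx0.le
  rw [S.rhs_eq_mul_sub hx0, sub_div_eq_half_sub_β S.one_lt.ne'] at hrhs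
  have hβ := β_pos S.one_lt
  have hf := (S.f_mem_Icc hx0).1
  have hcf : -(1 / 2) ≤ (1 / 2 - β q) * f x := by nlinarith [β_le_half S.two_lt.le]
  refine le_of_mul_le_mul_left ?_ hgx
  nlinarith

theorem eventually_mul_rhs_le (S : IsSolution q lam f g) :
    ∀ᶠ x in atTop, x * rhs q lam f g x ≤ 4 * g x := by
  have hβ := β_pos S.one_lt
  have hderiv : ∀ᶠ x in atTop, HasDerivAt (fun x => x * rhs q lam f g x - 4 * g x)
      (rhs q lam f g x + x * rhsDeriv q lam f g x - 4 * rhs q lam f g x) x := by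
    filter_upwards [eventually_gt_atTop 0] with x hx
    exact (((hasDerivAt_id x).mul (S.hasDerivAt_rhs hx (S.g_pos hx))).sub
      ((S.hasDerivAt_g x hx).const_mul 4)).congr_deriv (by simp)
  refine (eventually_nonpos_of_hasDerivAt_le_neg (mul_pos hβ (S.g_pos one_pos)) hderiv ?_).mono
    fun x hx => by linarith
  filter_upwards [S.eventually_β_div_two_mul_le, eventually_ge_atTop 1] with x hm hx1 hψ
  have hx0 : 0 < x := by linarith
  have hG := S.rhs_pos hx0.le
  have hgx := S.g_pos hx0
  have h4 : 4 * g x ≤ x * rhs q lam f g x := by linarith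
  have : x * rhsDeriv q lam f g x ≤ -(β q * x * g x) :=
    calc x * rhsDeriv q lam f g x
        = β q * x * g x - x * ((q * u q lam g x - x / 2) * rhs q lam f g x) := by
          rw [rhsDeriv]; ring
      _ ≤ β q * x * g x - x * (β q / 2 * x * rhs q lam f g x) := by gcongr
      _ = β q * x * g x - β q / 2 * x * (x * rhs q lam f g x) := by ring
      _ ≤ β q * x * g x - β q / 2 * x * (4 * g x) := by gcongr
      _ = -(β q * x * g x) := by ring
  have : g 1 ≤ x * g x := by nlinarith [S.g_one_le hx1]
  nlinarith [mul_le_mul_of_nonneg_left this hβ.le]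

theorem eventually_uDeriv_le (S : IsSolution q lam f g) :
    ∀ᶠ x in atTop, uDeriv q lam f g x ≤ 4 * (q - 1) := by
  filter_upwards [S.eventually_mul_rhs_le, S.eventually_u_le, eventually_gt_atTop 0]
    with x h4 hu hx0
  have hgx := S.g_pos hx0
  have hq1 : 0 < q - 1 := by linarith [S.one_lt]
  refine le_of_mul_le_mul_right ?_ (mul_pos hx0 hgx)
  calc uDeriv q lam f g x * (x * g x)
      = (q - 1) * u q lam g x * (x * rhs q lam f g x) := by
        rw [← mul_assoc, mul_comm _ x, mul_assoc, S.uDeriv_mul_g hx0]; ring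
    _ ≤ (q - 1) * x * (4 * g x) :=
        mul_le_mul (mul_le_mul_of_nonneg_left hu hq1.le) h4
          (mul_pos hx0 (S.rhs_pos hx0.le)).le (by positivity)
    _ = 4 * (q - 1) * (x * g x) := by ring

theorem hasDerivAt_rhsDeriv (S : IsSolution q lam f g) (hx : 0 < x) :
    HasDerivAt (rhsDeriv q lam f g) (β q * rhs q lam f g x
      + (1 / 2 - q * uDeriv q lam f g x) * rhs q lam f g x
      + (x / 2 - q * u q lam g x) * rhsDeriv q lam f g x) x := by
  have := ((S.hasDerivAt_g x hx).const_mul (β q)).add ((((hasDerivAt_id x).div_const 2).sub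
    ((S.hasDerivAt_u hx).const_mul q)).mul (S.hasDerivAt_rhs hx (S.g_pos hx)))
  exact this.congr_deriv (by simp only [id, Pi.sub_apply]; ring)

theorem eventually_rhsDeriv_le (S : IsSolution q lam f g) {δ : ℝ} (hδ : 0 < δ) :
    ∀ᶠ x in atTop, rhsDeriv q lam f g x ≤ δ * g x := by
  have hβ := β_pos S.one_lt
  have hderiv : ∀ᶠ x in atTop, HasDerivAt (fun x => rhsDeriv q lam f g x - δ * g x)
      (β q * rhs q lam f g x + (1 / 2 - q * uDeriv q lam f g x) * rhs q lam f g x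
        + (x / 2 - q * u q lam g x) * rhsDeriv q lam f g x - δ * rhs q lam f g x) x := by
    filter_upwards [eventually_gt_atTop 0] with x hx
    exact (S.hasDerivAt_rhsDeriv hx).sub ((S.hasDerivAt_g x hx).const_mul δ)
  refine (eventually_nonpos_of_hasDerivAt_le_neg (S.g_pos one_pos) hderiv ?_).mono
    fun x hx => by linarith
  filter_upwards [S.eventually_β_div_two_mul_le, S.eventually_mul_rhs_le,
    eventually_ge_atTop (5 / (β q / 2 * δ)), eventually_ge_atTop 1] with x hm h4 hbig hx1 hψ
  have hx0 : 0 < x := by linarith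
  rw [div_le_iff₀ (by positivity)] at hbig
  have hG := S.rhs_pos hx0.le
  have hgx := S.g_pos hx0
  have hΦ : δ * g x ≤ rhsDeriv q lam f g x := by linarith
  -- the damping term `(x/2 - q u) G' ≤ -(β/2) δ x g` dominates the others, which are `O(g)`
  have hdamp : (x / 2 - q * u q lam g x) * rhsDeriv q lam f g x ≤ -(β q / 2 * δ * x * g x) := by
    nlinarith [mul_le_mul_of_nonneg_left hΦ (by positivity : 0 ≤ β q / 2 * x),
      mul_le_mul_of_nonneg_right hm ((by positivity : 0 ≤ δ * g x).trans hΦ)]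
  have hsrc : β q * rhs q lam f g x + (1 / 2 - q * uDeriv q lam f g x) * rhs q lam f g x
      ≤ 4 * g x := by
    nlinarith [β_le_half S.two_lt.le, S.uDeriv_pos hx0, mul_pos (S.uDeriv_pos hx0) hG,
      S.one_lt]
  nlinarith [S.g_one_le hx1, mul_le_mul_of_nonneg_right hbig hgx.le]

theorem eventually_neg_le_rhsDeriv (S : IsSolution q lam f g) {δ : ℝ} (hδ : 0 < δ) :
    ∀ᶠ x in atTop, -(δ * g x) ≤ rhsDeriv q lam f g x := by
  have hβ := β_pos S.one_lt
  have hderiv : ∀ᶠ x in atTop, HasDerivAt (fun x => -rhsDeriv q lam f g x - δ * g x)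
      (-(β q * rhs q lam f g x + (1 / 2 - q * uDeriv q lam f g x) * rhs q lam f g x
        + (x / 2 - q * u q lam g x) * rhsDeriv q lam f g x) - δ * rhs q lam f g x) x := by
    filter_upwards [eventually_gt_atTop 0] with x hx
    exact (S.hasDerivAt_rhsDeriv hx).neg.sub ((S.hasDerivAt_g x hx).const_mul δ)
  refine (eventually_nonpos_of_hasDerivAt_le_neg (S.g_pos one_pos) hderiv ?_).mono
    fun x hx => by linarith
  filter_upwards [S.eventually_β_div_two_mul_le, S.eventually_mul_rhs_le, S.eventually_uDeriv_le,
    eventually_ge_atTop ((16 * q * (q - 1) + 1) / (β q / 2 * δ)), eventually_ge_atTop 1]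
    with x hm h4 hD hbig hx1 hψ
  have hx0 : 0 < x := by linarith
  rw [div_le_iff₀ (by positivity)] at hbig
  have hG := S.rhs_pos hx0.le
  have hgx := S.g_pos hx0
  have hΦ : rhsDeriv q lam f g x ≤ -(δ * g x) := by linarith
  have hdamp : -((x / 2 - q * u q lam g x) * rhsDeriv q lam f g x) ≤ -(β q / 2 * δ * x * g x) := by
    nlinarith [mul_le_mul_of_nonneg_left hΦ (by positivity : 0 ≤ β q / 2 * x),
      mul_le_mul_of_nonpos_right hm (hΦ.trans (by nlinarith : -(δ * g x) ≤ 0))]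
  have hsrc : -(β q * rhs q lam f g x + (1 / 2 - q * uDeriv q lam f g x) * rhs q lam f g x)
      ≤ 16 * q * (q - 1) * g x := by
    have hG4 : rhs q lam f g x ≤ 4 * g x := by nlinarith
    have hq := S.one_lt
    nlinarith [mul_le_mul hD hG4 hG.le (by linarith), mul_pos hβ hG]
  nlinarith [S.g_one_le hx1, mul_le_mul_of_nonneg_right hbig hgx.le]

theorem eventually_abs_mul_uDeriv_sub_le (S : IsSolution q lam f g) {η : ℝ} (hη : 0 < η) :
    ∀ᶠ x in atTop, |(q * u q lam g x - x / 2) * (q * uDeriv q lam f g x) - q * u q lam g x / 2|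
      ≤ η * (q * u q lam g x) := by
  have hq1 : 0 < q - 1 := by linarith [S.one_lt]
  obtain ⟨δ, hδ, rfl⟩ : ∃ δ, 0 < δ ∧ η = (q - 1) * δ :=
    ⟨η / (q - 1), div_pos hη hq1, by field_simp⟩
  filter_upwards [S.eventually_rhsDeriv_le hδ, S.eventually_neg_le_rhsDeriv hδ,
    eventually_gt_atTop 0] with x hup hlow hx0
  have hgx := S.g_pos hx0
  have hid : ((q * u q lam g x - x / 2) * (q * uDeriv q lam f g x) - q * u q lam g x / 2) * g x
      = -(q * (q - 1) * u q lam g x * rhsDeriv q lam f g x) := by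
    rw [rhsDeriv]
    linear_combination (q * (q * u q lam g x - x / 2)) * S.uDeriv_mul_g hx0
      + (q * u q lam g x * g x) * β_mul_sub_one S.one_lt.ne'
  have hc : 0 ≤ q * (q - 1) * u q lam g x := by
    have := S.u_pos hx0; have := S.one_lt; positivity
  rw [abs_le]
  constructor <;> refine le_of_mul_le_mul_right ?_ hgx <;> rw [hid] <;>
    nlinarith [mul_le_mul_of_nonneg_left hup hc, mul_le_mul_of_nonneg_left hlow hc]

theorem eventually_q_mul_u_le (S : IsSolution q lam f g) {ε : ℝ} (hε : 0 < ε) (hε1 : ε ≤ 1) :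
    ∀ᶠ x in atTop, q * u q lam g x ≤ (1 + ε) * x := by
  have hderiv : ∀ᶠ x in atTop, HasDerivAt (fun x => q * u q lam g x - (1 + ε) * x)
      (q * uDeriv q lam f g x - (1 + ε)) x := by
    filter_upwards [eventually_gt_atTop 0] with x hx
    exact (((S.hasDerivAt_u hx).const_mul q).sub ((hasDerivAt_id x).const_mul _)).congr_deriv
      (by simp)
  refine (eventually_nonpos_of_hasDerivAt_le_neg hε hderiv ?_).mono fun x hx => by linarith
  filter_upwards [S.eventually_abs_mul_uDeriv_sub_le (η := ε / 4) (by positivity),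
    eventually_gt_atTop 0] with x hkey hx0 hψ
  have hv : (1 + ε) * x ≤ q * u q lam g x := by linarith
  have hm : 0 < q * u q lam g x - x / 2 := by nlinarith
  have hkey' := (abs_le.1 hkey).2
  have : (q * u q lam g x - x / 2) * (q * uDeriv q lam f g x) ≤ (q * u q lam g x - x / 2) * 1 := by
    nlinarith [mul_le_mul_of_nonneg_left hv (by linarith : 0 ≤ 1 / 2 - ε / 4),
      mul_nonneg (mul_nonneg hε.le (sub_nonneg.2 hε1)) hx0.le]
  linarith [le_of_mul_le_mul_left this hm]

theorem eventually_le_q_mul_u (S : IsSolution q lam f g) {ε : ℝ} (hε : 0 < ε) (hε1 : ε ≤ 1) :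
    ∀ᶠ x in atTop, (1 - ε) * x ≤ q * u q lam g x := by
  have hderiv : ∀ᶠ x in atTop, HasDerivAt (fun x => (1 - ε) * x - q * u q lam g x)
      ((1 - ε) - q * uDeriv q lam f g x) x := by
    filter_upwards [eventually_gt_atTop 0] with x hx
    exact (((hasDerivAt_id x).const_mul _).sub ((S.hasDerivAt_u hx).const_mul q)).congr_deriv
      (by simp)
  refine (eventually_nonpos_of_hasDerivAt_le_neg (half_pos hε) hderiv ?_).mono
    fun x hx => by linarith
  filter_upwards [S.eventually_abs_mul_uDeriv_sub_le (η := ε / 4) (by positivity),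
    S.eventually_β_div_two_mul_le, eventually_gt_atTop 0] with x hkey hm hx0 hψ
  have hv : q * u q lam g x ≤ x := by nlinarith
  have hmpos : 0 < q * u q lam g x - x / 2 := by nlinarith [β_pos S.one_lt]
  have hkey' := (abs_le.1 hkey).1
  have : (q * u q lam g x - x / 2) * (1 - ε / 2)
      ≤ (q * u q lam g x - x / 2) * (q * uDeriv q lam f g x) := by
    nlinarith [mul_le_mul_of_nonneg_left hv (by linarith : 0 ≤ 1 / 2 - ε / 4)]
  linarith [le_of_mul_le_mul_left this hmpos]

theorem tendsto_q_mul_u_div (S : IsSolution q lam f g) :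
    Tendsto (fun x => q * u q lam g x / x) atTop (𝓝 1) := by
  refine Metric.tendsto_nhds.2 fun ε hε => ?_
  have hε' : 0 < min (ε / 2) 1 := lt_min (half_pos hε) one_pos
  filter_upwards [S.eventually_q_mul_u_le hε' (min_le_right _ _),
    S.eventually_le_q_mul_u hε' (min_le_right _ _), eventually_gt_atTop 0] with x hup hlow hx0
  have : |q * u q lam g x / x - 1| ≤ min (ε / 2) 1 := by
    rw [abs_le, le_sub_iff_add_le, sub_le_iff_le_add, le_div_iff₀ hx0, div_le_iff₀ hx0]
    constructor <;> linarith
  exact this.trans_lt ((min_le_left _ _).trans_lt (half_lt_self hε))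

theorem tendsto_g_div_rpow (S : IsSolution q lam f g) :
    Tendsto (fun x => g x / x ^ (1 / (q - 1))) atTop (𝓝 ((1 / (lam * q)) ^ (1 / (q - 1)))) := by
  have hq1 : q - 1 ≠ 0 := by linarith [S.one_lt]
  have hlim := (S.tendsto_q_mul_u_div.div_const (lam * q)).rpow_const (p := 1 / (q - 1))
    (Or.inl (by have := S.lam_pos; have := S.one_lt; positivity))
  refine hlim.congr' ?_
  filter_upwards [eventually_gt_atTop 0] with x hx
  have hgx := S.g_pos hx
  have : q * u q lam g x / x / (lam * q) = g x ^ (q - 1) / x := by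
    rw [u]; field_simp [S.lam_pos.ne', (by linarith [S.one_lt] : q ≠ 0)]
  rw [this, div_rpow (by positivity) hx.le, ← rpow_mul hgx.le, mul_one_div_cancel hq1, rpow_one]

end IsSolution
end KPZProfile

theorem SolvesKPZProfile.isSolution {q lam : ℝ} {f : ℝ → ℝ} (hq : 2 < q) (hlam : 0 < lam)
    (hsol : SolvesKPZProfile q lam (Ici 0) f) (hf0 : f 0 = -1)
    (hf'0 : derivWithin f (Ici 0) 0 = 0) :
    KPZProfile.IsSolution q lam f (derivWithin f (Ici 0)) := by
  obtain ⟨hcd, hode⟩ := hsol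
  have hcd' : ContDiffOn ℝ 1 (derivWithin f (Ici 0)) (Ici 0) :=
    hcd.derivWithin (uniqueDiffOn_Ici 0) (by norm_num)
  have hderiv {φ : ℝ → ℝ} (hφ : ContDiffOn ℝ 1 φ (Ici 0)) (x : ℝ) (hx : 0 < x) :
      HasDerivAt φ (derivWithin φ (Ici 0) x) x :=
    ((hφ.differentiableOn one_ne_zero) x hx.le).hasDerivWithinAt.hasDerivAt (Ici_mem_nhds hx)
  refine ⟨hq, hlam, hcd.continuousOn, hcd'.continuousOn, hderiv (hcd.of_le (by norm_num)),
    fun x hx => (hderiv hcd' x hx).congr_deriv ?_, hf0, hf'0⟩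
  rw [KPZProfile.rhs]
  linarith [hode x hx.le]

theorem kpz_profile_deriv_asymptotics (q lam : ℝ) (hq : 2 < q) (hlam : 0 < lam)
    (f : ℝ → ℝ)
    (hsol : SolvesKPZProfile q lam (Set.Ici 0) f)
    (hf0 : f 0 = -1)
    (hf'0 : derivWithin f (Set.Ici 0) 0 = 0) :
    Tendsto (fun ξ : ℝ => derivWithin f (Set.Ici 0) ξ / ξ ^ (1 / (q - 1))) atTop
      (𝓝 ((1 / (lam * q)) ^ (1 / (q - 1)))) :=
  (hsol.isSolution hq hlam hf0 hf'0).tendsto_g_div_rpow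
end
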